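/- Let d and p be nonnegative integers with p < 2d and let G and H be finite connected simple graphs. If γ_d^p(G) = ∞ and H contains a (d,p)-close vertex, then γ_d^p(G ⊠ H) = ∞. -/

import Mathlib

open SimpleGraph

/-- The strong product `G ⊠ H` of two simple graphs. -/
def strongProd {α β : Type*} (G : SimpleGraph α) (H : SimpleGraph β) :
    SimpleGraph (α × β) where
  Adj x y := (G.Adj x.1 y.1 ∧ x.2 = y.2) ∨ (x.1 = y.1 ∧ H.Adj x.2 y.2) ∨
    (G.Adj x.1 y.1 ∧ H.Adj x.2 y.2)
  symm := by
    refine ⟨?_⟩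
    rintro ⟨a, b⟩ ⟨c, e⟩ (⟨h1, h2⟩ | ⟨h1, h2⟩ | ⟨h1, h2⟩)
    · exact Or.inl ⟨h1.symm, h2.symm⟩
    · exact Or.inr (Or.inl ⟨h1.symm, h2.symm⟩)
    · exact Or.inr (Or.inr ⟨h1.symm, h2.symm⟩)
  loopless := by
    refine ⟨?_⟩
    rintro ⟨a, b⟩ (⟨h1, _⟩ | ⟨_, h2⟩ | ⟨h1, _⟩)
    · exact G.irrefl h1
    · exact H.irrefl h2
    · exact G.irrefl h1

/-- `S` is a `d`-distance dominating set of `G`: every vertex is within distance `d`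
of some vertex of `S`. -/
def IsDistDomSet {V : Type*} (G : SimpleGraph V) (d : ℕ) (S : Finset V) : Prop :=
  ∀ v : V, ∃ u ∈ S, G.dist u v ≤ d

/-- `S` is a `p`-packing of `G`: distinct vertices of `S` are at distance at least `p + 1`. -/
def IsPacking {V : Type*} (G : SimpleGraph V) (p : ℕ) (S : Finset V) : Prop :=
  ∀ x ∈ S, ∀ y ∈ S, x ≠ y → p + 1 ≤ G.dist x y

/-- The `d`-distance `p`-packing domination number `γ_d^p(G)`, an element of `ℕ∞`,
equal to `⊤` if no `d`-distance dominating `p`-packing exists. -/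
noncomputable def distPackDomNum {V : Type*} (G : SimpleGraph V) (d p : ℕ) : ℕ∞ :=
  sInf {n : ℕ∞ | ∃ S : Finset V, n = S.card ∧ IsDistDomSet G d S ∧ IsPacking G p S}

/-- The radius of a graph: the least `k` such that some vertex is within
distance `k` of all vertices. -/
noncomputable def graphRadius {V : Type*} (G : SimpleGraph V) : ℕ :=
  sInf {k : ℕ | ∃ u : V, ∀ v : V, G.dist u v ≤ k}
/-- A vertex `u` of `H` is `(d,p)`-close if any two vertices within distance `d`
of `u` are at distance at most `p` from each other. -/
def IsClose {W : Type*} (H : SimpleGraph W) (d p : ℕ) (u : W) : Prop :=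
  ∀ x y : W, H.dist u x ≤ d → H.dist u y ≤ d → H.dist x y ≤ p

section Aux

variable {α β : Type*} {G : SimpleGraph α} {H : SimpleGraph β}

/-- Combine a `G`-walk and an `H`-walk into a walk in the strong product of length
the max of the lengths. -/
lemma exists_walk_lift {h h' : β} (g : α) (wH : H.Walk h h') :
    ∃ w : (strongProd G H).Walk (g, h) (g, h'), w.length = wH.length := by
  induction wH with
  | nil => exact ⟨.nil, rfl⟩
  | @cons x y z a wH' ih =>
    obtain ⟨w, hw⟩ := ih
    have ha : (strongProd G H).Adj (g, x) (g, y) := Or.inr (Or.inl ⟨rfl, a⟩)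
    exact ⟨.cons ha w, by simp [hw]⟩

/-- Combine a `G`-walk and an `H`-walk into a walk in the strong product of length
the max of the lengths. -/
lemma exists_walk_max {g g' : α} {h h' : β} (wG : G.Walk g g') (wH : H.Walk h h') :
    ∃ w : (strongProd G H).Walk (g, h) (g', h'), w.length = max wG.length wH.length := by
  induction wG generalizing h with
  | nil =>
    obtain ⟨w, hw⟩ := exists_walk_lift (G := G) _ wH
    exact ⟨w, by simp [hw]⟩
  | @cons x y z a wG' ih =>
    cases wH with
    | nil =>
      obtain ⟨w, hw⟩ := ih (Walk.nil (u := h'))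
      have ha : (strongProd G H).Adj (x, h') (y, h') := Or.inl ⟨a, rfl⟩
      exact ⟨.cons ha w, by simp [hw]⟩
    | @cons _ h2 _ b wH' =>
      obtain ⟨w, hw⟩ := ih wH'
      have ha : (strongProd G H).Adj (x, h) (y, h2) := Or.inr (Or.inr ⟨a, b⟩)
      refine ⟨.cons ha w, ?_⟩
      simp [hw, Nat.succ_max_succ]

lemma prod_connected (hG : G.Connected) (hH : H.Connected) :
    (strongProd G H).Connected := by
  rw [connected_iff]
  refine ⟨fun x y => ?_, ?_⟩
  · obtain ⟨wG, _⟩ := (hG x.1 y.1).exists_walk_length_eq_dist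
    obtain ⟨wH, _⟩ := (hH x.2 y.2).exists_walk_length_eq_dist
    obtain ⟨w, _⟩ := exists_walk_max wG wH
    exact ⟨w⟩
  · obtain ⟨g⟩ := hG.nonempty
    obtain ⟨h⟩ := hH.nonempty
    exact ⟨(g, h)⟩

lemma dist_prod_le_max (hG : G.Connected) (hH : H.Connected) (x y : α × β) :
    (strongProd G H).dist x y ≤ max (G.dist x.1 y.1) (H.dist x.2 y.2) := by
  obtain ⟨wG, hwG⟩ := (hG x.1 y.1).exists_walk_length_eq_dist
  obtain ⟨wH, hwH⟩ := (hH x.2 y.2).exists_walk_length_eq_dist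
  obtain ⟨w, hw⟩ := exists_walk_max wG wH
  calc (strongProd G H).dist x y ≤ w.length := dist_le w
    _ = _ := by rw [hw, hwG, hwH]

lemma proj_dist_le (hG : G.Connected) (hH : H.Connected) {x y : α × β}
    (w : (strongProd G H).Walk x y) :
    G.dist x.1 y.1 ≤ w.length ∧ H.dist x.2 y.2 ≤ w.length := by
  induction w with
  | nil => simp
  | @cons a b c adj w' ih =>
    constructor
    · have h1 : G.dist a.1 b.1 ≤ 1 := by
        rcases adj with ⟨h, _⟩ | ⟨h, _⟩ | ⟨h, _⟩
        · exact dist_le h.toWalk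
        · simp [h, SimpleGraph.dist_self]
        · exact dist_le h.toWalk
      calc G.dist a.1 c.1 ≤ G.dist a.1 b.1 + G.dist b.1 c.1 := hG.dist_triangle
        _ ≤ 1 + w'.length := Nat.add_le_add h1 ih.1
        _ = w'.length + 1 := Nat.add_comm _ _
    · have h1 : H.dist a.2 b.2 ≤ 1 := by
        rcases adj with ⟨_, h⟩ | ⟨_, h⟩ | ⟨_, h⟩
        · simp [h, SimpleGraph.dist_self]
        · exact dist_le h.toWalk
        · exact dist_le h.toWalk
      calc H.dist a.2 c.2 ≤ H.dist a.2 b.2 + H.dist b.2 c.2 := hH.dist_triangle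
        _ ≤ 1 + w'.length := Nat.add_le_add h1 ih.2
        _ = w'.length + 1 := Nat.add_comm _ _

lemma proj_dist_le' (hG : G.Connected) (hH : H.Connected) (x y : α × β) :
    G.dist x.1 y.1 ≤ (strongProd G H).dist x y ∧
      H.dist x.2 y.2 ≤ (strongProd G H).dist x y := by
  obtain ⟨w, hw⟩ := ((prod_connected hG hH) x y).exists_walk_length_eq_dist
  have := proj_dist_le hG hH w
  rw [hw] at this
  exact this

end Aux

theorem gamma_strongProd_eq_top_of_close {α β : Type*} [Fintype α] [Fintype β]
    (d p : ℕ) (hp : p < 2 * d) (G : SimpleGraph α) (H : SimpleGraph β)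
    (hG : G.Connected) (hH : H.Connected)
    (hGtop : distPackDomNum G d p = ⊤) (hu : ∃ u : β, IsClose H d p u) :
    distPackDomNum (strongProd G H) d p = ⊤ := by
  obtain ⟨u, hu⟩ := hu
  rw [distPackDomNum, sInf_eq_top] at hGtop ⊢
  rintro n ⟨S, rfl, hdom, hpack⟩
  exfalso
  classical
  set T : Finset (α × β) := S.filter (fun x => H.dist x.2 u ≤ d) with hT
  set SG : Finset α := T.image Prod.fst with hSG
  have hdomG : IsDistDomSet G d SG := by
    intro g
    obtain ⟨x, hxS, hxd⟩ := hdom (g, u)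
    have hproj := proj_dist_le' hG hH x (g, u)
    refine ⟨x.1, ?_, le_trans hproj.1 hxd⟩
    exact Finset.mem_image.mpr ⟨x, Finset.mem_filter.mpr ⟨hxS, le_trans hproj.2 hxd⟩, rfl⟩
  have hpackG : IsPacking G p SG := by
    intro a ha b hb hab
    obtain ⟨x, hxT, hx1⟩ := Finset.mem_image.mp ha
    obtain ⟨y, hyT, hy1⟩ := Finset.mem_image.mp hb
    obtain ⟨hxS, hxd⟩ := Finset.mem_filter.mp hxT
    obtain ⟨hyS, hyd⟩ := Finset.mem_filter.mp hyT
    have hxy : x ≠ y := by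
      rintro rfl; exact hab (hx1 ▸ hy1)
    have h1 : p + 1 ≤ (strongProd G H).dist x y := hpack x hxS y hyS hxy
    have h2 : (strongProd G H).dist x y ≤ max (G.dist x.1 y.1) (H.dist x.2 y.2) :=
      dist_prod_le_max hG hH x y
    have h3 : H.dist x.2 y.2 ≤ p := by
      refine hu x.2 y.2 ?_ ?_ <;> rw [dist_comm] <;> assumption
    have h4 : p + 1 ≤ max (G.dist x.1 y.1) (H.dist x.2 y.2) := le_trans h1 h2
    rcases max_le_iff.mp (le_refl (max (G.dist x.1 y.1) (H.dist x.2 y.2))) with ⟨_, _⟩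
    rcases le_or_gt (p + 1) (G.dist x.1 y.1) with h | h
    · exact hx1 ▸ hy1 ▸ h
    · omega
  have := hGtop (SG.card : ℕ∞) ⟨SG, rfl, hdomG, hpackG⟩
  exact (ENat.coe_ne_top _) this
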